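/- Let V be a nonzero finite-dimensional complex inner product space and let T₁,…,T_d be pairwise commuting self-adjoint endomorphisms of V. For c = (c₁,…,c_d) ∈ ℝ^d set φ_c(x) = Σ_{i=1}^d (x_i − c_i)². Then the spectrum of the self-adjoint operator Σ_{i=1}^d (T_i − c_i·Id)² is exactly the image of the joint spectrum of (T₁,…,T_d) under φ_c; in particular, the minimum of the spectrum of Σᵢ(T_i − c_i)² equals the square of the euclidean distance from c to the joint spectrum. -/

import Mathlib

/-!
Commuting symmetric operators are simultaneously diagonalizable: `V` is spanned by the joint
eigenspaces. On a joint eigenvector with joint eigenvalue `λ` (necessarily real), the operator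
`Σᵢ (Tᵢ - cᵢ)²` acts as the scalar `φ_c(λ)`, so every `φ_c(λ)` is in its spectrum; conversely,
since eigenspaces for distinct eigenvalues are independent, an eigenvalue not of this form
would have a zero eigenspace. Finally `φ_c(λ) = dist(c, λ)²`, and squaring is monotone and
continuous on `[0, ∞)`, so it commutes with the infimum.
-/

open Module End

namespace Module.End

theorem exists_ne_bot_and_eq_of_hasEigenvalue {R M ι : Type*} [CommRing R] [IsDomain R]
    [AddCommGroup M] [Module R M] [Module.IsTorsionFree R M] {f : End R M}
    {W : ι → Submodule R M} {g : ι → R} (hW : ⨆ j, W j = ⊤) (hWf : ∀ j, W j ≤ f.eigenspace (g j))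
    {μ : R} (hμ : f.HasEigenvalue μ) : ∃ j, W j ≠ ⊥ ∧ g j = μ := by
  by_contra! h
  have hle : ⊤ ≤ ⨆ ν, ⨆ _ : ν ≠ μ, f.eigenspace ν := hW ▸ iSup_le fun j => by
    by_cases hj : W j = ⊥
    · simp [hj]
    · exact (hWf j).trans (le_iSup₂ (f := fun ν _ => f.eigenspace ν) (g j) (h j hj))
  exact hμ (disjoint_top.mp (top_le_iff.mp hle ▸ f.eigenspaces_iSupIndep μ))

variable {R M ι : Type*} [CommRing R] [AddCommGroup M] [Module R M]

theorem sum_sq_sub_smul_one_apply (s : Finset ι) (T : ι → End R M) (a χ : ι → R) {v : M}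
    (hv : ∀ i, T i v = χ i • v) :
    (∑ i ∈ s, (T i - a i • 1) ^ 2 : End R M) v = (∑ i ∈ s, (χ i - a i) ^ 2) • v := by
  have hshift (i : ι) : (T i - a i • 1) v = (χ i - a i) • v := by
    simp [hv i, sub_smul]
  simp only [LinearMap.sum_apply, sq, Module.End.mul_apply, hshift, map_smul, smul_smul,
    Finset.sum_smul]

theorem iInf_eigenspace_le_eigenspace_sum_sq_sub_smul_one (s : Finset ι) (T : ι → End R M)
    (a χ : ι → R) :
    ⨅ i, (T i).eigenspace (χ i) ≤
      (∑ i ∈ s, (T i - a i • 1) ^ 2).eigenspace (∑ i ∈ s, (χ i - a i) ^ 2) := fun v hv => by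
  rw [mem_eigenspace_iff]
  exact sum_sq_sub_smul_one_apply s T a χ fun i =>
    mem_eigenspace_iff.mp (Submodule.mem_iInf _ |>.mp hv i)

end Module.End

theorem LinearMap.IsSymmetric.ofReal_re_eq_of_apply_eq_smul {𝕜 E : Type*} [RCLike 𝕜]
    [NormedAddCommGroup E] [InnerProductSpace 𝕜 E] {T : E →ₗ[𝕜] E} (hT : T.IsSymmetric)
    {μ : 𝕜} {v : E} (hv0 : v ≠ 0) (hv : T v = μ • v) : (RCLike.re μ : 𝕜) = μ :=
  RCLike.conj_eq_iff_re.mp <| hT.conj_eigenvalue_eq_self <|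
    hasEigenvalue_of_hasEigenvector ⟨mem_eigenspace_iff.mpr hv, hv0⟩

theorem Metric.sInf_image_dist_sq {α : Type*} [PseudoMetricSpace α] (x : α) {s : Set α}
    (hs : s.Nonempty) : sInf ((fun y => dist x y ^ 2) '' s) = infDist x s ^ 2 := by
  have hglb := isGLB_infDist (x := x) hs
  rw [← hglb.csInf_eq (hs.image _), ← Set.image_image (· ^ 2) (dist x)]
  refine (MonotoneOn.map_csInf_of_continuousWithinAt ?_ ?_ (hs.image _) hglb.bddBelow).symm
  · exact (continuous_pow 2).continuousWithinAt
  · rintro _ ⟨y, -, rfl⟩ _ ⟨z, -, rfl⟩ h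
    exact pow_le_pow_left₀ dist_nonneg h 2

theorem EuclideanSpace.sum_sq_sub_eq_dist_sq {ι : Type*} [Fintype ι] (x y : EuclideanSpace ℝ ι) :
    ∑ i, (x i - y i) ^ 2 = dist x y ^ 2 := by
  simp only [EuclideanSpace.dist_sq_eq, Real.dist_eq, sq_abs]

def jointSpectrum {V ι : Type*} [AddCommGroup V] [Module ℂ V] (T : ι → Module.End ℂ V) :
    Set (EuclideanSpace ℝ ι) :=
  {lam | ∃ v : V, v ≠ 0 ∧ ∀ i, T i v = (lam i : ℂ) • v}

section JointSpectrum

open scoped Function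

variable {V ι : Type*} [NormedAddCommGroup V] [InnerProductSpace ℂ V] {T : ι → Module.End ℂ V}

theorem exists_mem_jointSpectrum_of_mem_iInf_eigenspace (hT : ∀ i, (T i).IsSymmetric)
    {χ : ι → ℂ} {v : V} (hv0 : v ≠ 0) (hv : v ∈ ⨅ i, (T i).eigenspace (χ i)) :
    ∃ lam ∈ jointSpectrum T, ∀ i, (lam i : ℂ) = χ i := by
  have hTv (i : ι) : T i v = χ i • v := mem_eigenspace_iff.mp (Submodule.mem_iInf _ |>.mp hv i)
  have hre (i : ι) : ((χ i).re : ℂ) = χ i := (hT i).ofReal_re_eq_of_apply_eq_smul hv0 (hTv i)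
  exact ⟨WithLp.toLp 2 fun i => (χ i).re, ⟨v, hv0, fun i => by simp [hre, hTv]⟩, hre⟩

variable [FiniteDimensional ℂ V] (hT : ∀ i, (T i).IsSymmetric) (hTT : Pairwise (Commute on T))
include hT hTT

theorem jointSpectrum_nonempty [Nontrivial V] : (jointSpectrum T).Nonempty := by
  have hne : ⨆ χ : ι → ℂ, ⨅ i, (T i).eigenspace (χ i) ≠ ⊥ := by
    rw [LinearMap.IsSymmetric.iSup_iInf_eq_top_of_commute hT hTT]
    exact top_ne_bot
  obtain ⟨χ, hχ⟩ := by simpa only [ne_eq, iSup_eq_bot, not_forall] using hne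
  obtain ⟨v, hv, hv0⟩ := Submodule.exists_mem_ne_zero_of_ne_bot hχ
  obtain ⟨lam, hlam, -⟩ := exists_mem_jointSpectrum_of_mem_iInf_eigenspace hT hv0 hv
  exact ⟨lam, hlam⟩

theorem spectrum_sum_sq_sub_smul_one_eq_image_jointSpectrum [Fintype ι]
    (c : EuclideanSpace ℝ ι) :
    spectrum ℝ (∑ i, (T i - (c i : ℂ) • 1) ^ 2) =
      (fun lam : EuclideanSpace ℝ ι => ∑ i, (lam i - c i) ^ 2) '' jointSpectrum T := by
  ext r
  constructor
  · intro hr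
    have hev : HasEigenvalue (∑ i, (T i - (c i : ℂ) • 1) ^ 2) (r : ℂ) :=
      hasEigenvalue_iff_mem_spectrum.mpr (spectrum.algebraMap_mem ℂ hr)
    obtain ⟨χ, hne, hχr⟩ := exists_ne_bot_and_eq_of_hasEigenvalue
      (LinearMap.IsSymmetric.iSup_iInf_eq_top_of_commute hT hTT)
      (iInf_eigenspace_le_eigenspace_sum_sq_sub_smul_one _ T (fun i => (c i : ℂ))) hev
    obtain ⟨v, hv, hv0⟩ := Submodule.exists_mem_ne_zero_of_ne_bot hne
    obtain ⟨lam, hlam, hχ⟩ := exists_mem_jointSpectrum_of_mem_iInf_eigenspace hT hv0 hv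
    refine ⟨lam, hlam, ?_⟩
    have hφ : ((∑ i, (lam i - c i) ^ 2 : ℝ) : ℂ) = r := by
      push_cast
      simpa only [← hχ] using hχr
    exact_mod_cast hφ
  · rintro ⟨lam, ⟨v, hv0, hv⟩, rfl⟩
    refine spectrum.of_algebraMap_mem ℂ (hasEigenvalue_iff_mem_spectrum.mp ?_)
    refine hasEigenvalue_of_hasEigenvector ⟨?_, hv0⟩
    rw [mem_eigenspace_iff, sum_sq_sub_smul_one_apply _ T _ _ hv]
    push_cast
    rfl

end JointSpectrum

/-- **Spectrum of `Σᵢ (Tᵢ − cᵢ)²` and distance to the joint spectrum.** Let `V` be a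
nonzero finite-dimensional complex inner product space and let `T₁, …, T_d` be pairwise
commuting self-adjoint (symmetric) endomorphisms of `V`. For `c ∈ ℝ^d` and
`φ_c(x) = Σᵢ (xᵢ − cᵢ)²`, the spectrum of `Σᵢ (Tᵢ − cᵢ·Id)²` is exactly the image under
`φ_c` of the joint spectrum of `(T₁, …, T_d)`, and its infimum is the square of the
euclidean distance from `c` to the joint spectrum. -/
theorem spectrum_sum_squares_eq_image_jointSpectrum
    {V : Type*} [NormedAddCommGroup V] [InnerProductSpace ℂ V]
    [FiniteDimensional ℂ V] [Nontrivial V]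
    (d : ℕ) (T : Fin d → Module.End ℂ V)
    (hsa : ∀ i, LinearMap.IsSymmetric (T i))
    (hcomm : ∀ i j, Commute (T i) (T j))
    (c : EuclideanSpace ℝ (Fin d)) :
    spectrum ℝ (∑ i, (T i - (c i : ℂ) • 1) ^ 2)
        = (fun lam : EuclideanSpace ℝ (Fin d) => ∑ i, (lam i - c i) ^ 2) ''
          {lam : EuclideanSpace ℝ (Fin d) | ∃ v : V, v ≠ 0 ∧
            ∀ i, T i v = (lam i : ℂ) • v} ∧
    sInf (spectrum ℝ (∑ i, (T i - (c i : ℂ) • 1) ^ 2))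
        = (Metric.infDist c {lam : EuclideanSpace ℝ (Fin d) | ∃ v : V, v ≠ 0 ∧
            ∀ i, T i v = (lam i : ℂ) • v}) ^ 2 := by
  have hTT : Pairwise fun i j => Commute (T i) (T j) := fun i j _ => hcomm i j
  have hspec := spectrum_sum_sq_sub_smul_one_eq_image_jointSpectrum hsa hTT c
  refine ⟨hspec, ?_⟩
  simp_rw [hspec, EuclideanSpace.sum_sq_sub_eq_dist_sq, dist_comm _ c]
  exact Metric.sInf_image_dist_sq c (jointSpectrum_nonempty hsa hTT)
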